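/- Let (M, t_a, h^{ab}, ∇) be a classical spacetime with t_a closed, ∇_a t_b = Q_{ab} and ∇_a h^{bc} = Q_a^{bc}, and ∇ torsion-free. Then the map ξ^a ↦ ∇^[a ξ^{b]} is a standard of rotation compatible with t_a and h^{ab} if and only if h^{an} Q_{nb} = 0 and h^{n[a} Q_n^{b]c} = 0. -/

import Mathlib

open scoped BigOperators

/-- Index type for a 4-dimensional manifold (in a global coordinate chart). -/
abbrev Ix : Type := Fin 4
/-- Points of the manifold, identified with ℝ⁴ via a global chart. -/
abbrev Pt : Type := Ix → ℝ
/-- Scalar fields. -/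
abbrev Sca : Type := Pt → ℝ
/-- Vector fields ξ^a (components). -/
abbrev Vec : Type := Pt → Ix → ℝ
/-- One-form fields t_a (components). -/
abbrev Cov : Type := Pt → Ix → ℝ
/-- Rank-2 tensor fields (components). -/
abbrev Ten2 : Type := Pt → Ix → Ix → ℝ
/-- Rank-3 tensor fields (components). -/
abbrev Ten3 : Type := Pt → Ix → Ix → Ix → ℝ
/-- Affine connections, given by Christoffel symbols Γ^a_{bc} = Γ p a b c
(first lower index `b` is the derivative index). -/
abbrev Conn : Type := Pt → Ix → Ix → Ix → ℝ

/-- Partial (coordinate) derivative ∂_i. -/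
noncomputable def pd (i : Ix) (f : Sca) : Sca := fun p => fderiv ℝ f p (Pi.single i (1 : ℝ))

/-- Covariant derivative of a vector field: (covV Γ ξ) p a b = ∇_b ξ^a = ∂_b ξ^a + Γ^a_{bn} ξ^n. -/
noncomputable def covV (Γ : Conn) (ξ : Vec) : Pt → Ix → Ix → ℝ :=
  fun p a b => pd b (fun q => ξ q a) p + ∑ n, Γ p a b n * ξ p n

/-- Covariant derivative of a one-form: (covC Γ t) p a b = ∇_a t_b = ∂_a t_b − Γ^n_{ab} t_n. -/
noncomputable def covC (Γ : Conn) (t : Cov) : Ten2 :=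
  fun p a b => pd a (fun q => t q b) p - ∑ n, Γ p n a b * t p n

/-- Covariant derivative of a (2,0)-tensor: ∇_a h^{bc}. -/
noncomputable def covT20 (Γ : Conn) (h : Ten2) : Ten3 :=
  fun p a b c => pd a (fun q => h q b c) p + ∑ n, Γ p b a n * h p n c + ∑ n, Γ p c a n * h p b n

/-- Covariant derivative of a (0,2)-tensor: ∇_a g_{bc}. -/
noncomputable def covT02 (Γ : Conn) (g : Ten2) : Ten3 :=
  fun p a b c => pd a (fun q => g q b c) p - ∑ n, Γ p n a b * g p n c - ∑ n, Γ p n a c * g p b n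

/-- Torsion tensor T^a_{bc} of a connection, with the sign convention
2∇_[b ∇_c] α = T^n_{bc} ∇_n α for scalar fields α. -/
def torsion (Γ : Conn) : Conn := fun p a b c => Γ p a c b - Γ p a b c

/-- Riemann curvature tensor R^a_{bcd} of a connection. -/
noncomputable def riem (Γ : Conn) : Pt → Ix → Ix → Ix → Ix → ℝ :=
  fun p a b c d => pd c (fun q => Γ q a d b) p - pd d (fun q => Γ q a c b) p
    + ∑ n, Γ p a c n * Γ p n d b - ∑ n, Γ p a d n * Γ p n c b

/-- Ricci tensor R_{bd} of a connection. -/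
noncomputable def ricci (Γ : Conn) : Ten2 := fun p b d => ∑ a, riem Γ p a b a d

/-- A connection is torsion-free if its torsion tensor vanishes. -/
def TorsionFree (Γ : Conn) : Prop := ∀ p a b c, torsion Γ p a b c = 0

/-- A one-form is closed: antisymmetrized partial derivatives vanish. -/
def Closed1Form (t : Cov) : Prop := ∀ p a b, pd a (fun q => t q b) p = pd b (fun q => t q a) p

/-- A classical (non-relativistic, Leibnizian) spacetime: a degenerate temporal
metric t_a and spatial metric h^{ab} on M = ℝ⁴, mutually orthogonal, with t_a
nowhere vanishing and closed, h^{ab} symmetric, positive semi-definite, of rank 3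
with kernel spanned by t_a. -/
structure ClassicalSpacetime where
  t : Cov
  h : Ten2
  smooth_t : ContDiff ℝ (⊤ : ℕ∞) t
  smooth_h : ContDiff ℝ (⊤ : ℕ∞) h
  t_ne : ∀ p, t p ≠ 0
  t_closed : Closed1Form t
  h_symm : ∀ p a b, h p a b = h p b a
  orth : ∀ p b, ∑ a, t p a * h p a b = 0
  h_psd : ∀ p (v : Ix → ℝ), 0 ≤ ∑ a, ∑ b, h p a b * v a * v b
  h_ker : ∀ p (ω : Ix → ℝ), (∀ a, ∑ b, h p a b * ω b = 0) ↔ ∃ c : ℝ, ω = c • t p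

/-- ∇ is compatible with both classical metrics: ∇_a t_b = 0 and ∇_a h^{bc} = 0. -/
def MetricCompatible (S : ClassicalSpacetime) (Γ : Conn) : Prop :=
  (∀ p a b, covC Γ S.t p a b = 0) ∧ (∀ p a b c, covT20 Γ S.h p a b c = 0)

/-- A smooth unit timelike vector field: t_n ξ^n = 1. -/
def UnitTimelike (S : ClassicalSpacetime) (ξ : Vec) : Prop :=
  ContDiff ℝ (⊤ : ℕ∞) ξ ∧ ∀ p, ∑ n, S.t p n * ξ p n = 1

/-- A spacelike vector field: t_n σ^n = 0. -/
def Spacelike (S : ClassicalSpacetime) (σ : Vec) : Prop := ∀ p, ∑ n, S.t p n * σ p n = 0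

/-- ĥ_{ab} is the spatial projector relative to the unit timelike field ξ^a:
ĥ symmetric, ĥ_{an} ξ^n = 0 and h^{an} ĥ_{nb} = δ^a_b − t_b ξ^a. -/
def IsProjector (S : ClassicalSpacetime) (ξ : Vec) (hh : Ten2) : Prop :=
  (∀ p a b, hh p a b = hh p b a) ∧ (∀ p a, ∑ n, hh p a n * ξ p n = 0) ∧
  (∀ p a b, ∑ n, S.h p a n * hh p n b = (if a = b then (1:ℝ) else 0) - S.t p b * ξ p a)

/-- The mixed projector ĥ^i_j = δ^i_j − t_j ξ^i relative to ξ^a. -/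
def proj (S : ClassicalSpacetime) (ξ : Vec) : Pt → Ix → Ix → ℝ :=
  fun p i j => (if i = j then (1:ℝ) else 0) - S.t p j * ξ p i

/-- The rotation-type map determined by a connection:
(rotOf S Γ ξ) p a b = ∇^[a ξ^{b]} = (1/2)(h^{na} ∇_n ξ^b − h^{nb} ∇_n ξ^a). -/
noncomputable def rotOf (S : ClassicalSpacetime) (Γ : Conn) (ξ : Vec) : Ten2 :=
  fun p a b => (1/2) * (∑ n, S.h p n a * covV Γ ξ p b n - ∑ n, S.h p n b * covV Γ ξ p a n)

/-- h^{n[a} ĥ_{nm} ĥ^{b]}_r ∇'^m σ^r, without antisymmetrization: the projected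
spatial derivative h^{na} D_n σ^b of a spacelike vector field σ, computed from ξ,
its projector ĥ, and an auxiliary connection Γ' with ∇'^a h^{bc} = 0. -/
noncomputable def spatialD (S : ClassicalSpacetime) (ξ : Vec) (hh : Ten2) (Γ' : Conn)
    (σ : Vec) : Ten2 :=
  fun p a b => ∑ n, ∑ m, ∑ r,
    S.h p n a * hh p n m * (∑ s, S.h p b s * hh p s r) * (∑ k, S.h p m k * covV Γ' σ p r k)

/-- Weatherall's notion of a standard of rotation compatible with t_a and h^{ab}:
(1) additivity; (2) Leibniz rule ↻^a(αξ^b) = α ↻^a ξ^b + ξ^[b d^{a]}α;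
(3) antisymmetry (commuting with index substitution); (4) if d_a(ξ^n t_n) = 0 then
↻^a ξ^b is spacelike in both indices; (5) on spacelike fields ↻ agrees with the
induced spatial Levi-Civita derivative: ↻^a σ^b = D^[a σ^{b]}. -/
def IsRotationStd (S : ClassicalSpacetime) (R : Vec → Ten2) : Prop :=
  (∀ ξ η : Vec, ContDiff ℝ (⊤ : ℕ∞) ξ → ContDiff ℝ (⊤ : ℕ∞) η → R (ξ + η) = R ξ + R η) ∧
  (∀ (α : Sca) (ξ : Vec), ContDiff ℝ (⊤ : ℕ∞) α → ContDiff ℝ (⊤ : ℕ∞) ξ → ∀ p a b,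
      R (fun q c => α q * ξ q c) p a b
        = α p * R ξ p a b
          + (1/2) * (ξ p b * (∑ n, S.h p a n * pd n α p)
              - ξ p a * (∑ n, S.h p b n * pd n α p))) ∧
  (∀ ξ : Vec, ContDiff ℝ (⊤ : ℕ∞) ξ → ∀ p a b, R ξ p a b = - R ξ p b a) ∧
  (∀ ξ : Vec, ContDiff ℝ (⊤ : ℕ∞) ξ →
      (∀ p a, pd a (fun q => ∑ n, ξ q n * S.t q n) p = 0) →
      ∀ p b, (∑ n, S.t p n * R ξ p n b = 0) ∧ (∑ n, S.t p n * R ξ p b n = 0)) ∧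
  (∀ (ξ : Vec) (hh : Ten2) (Γ' : Conn) (σ : Vec),
      UnitTimelike S ξ → IsProjector S ξ hh → TorsionFree Γ' →
      (∀ p a b c, ∑ n, S.h p a n * covT20 Γ' S.h p n b c = 0) →
      ContDiff ℝ (⊤ : ℕ∞) σ → Spacelike S σ →
      ∀ p a b, R σ p a b
        = (1/2) * (spatialD S ξ hh Γ' σ p a b - spatialD S ξ hh Γ' σ p b a))

section Aux
/-- component differentiability -/
lemma diffV {f : Vec} (hf : ContDiff ℝ (⊤ : ℕ∞) f) (a : Ix) :
    Differentiable ℝ (fun q => f q a) :=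
  ((contDiff_pi.mp hf a).differentiable (by simp))

lemma diffT2 {f : Ten2} (hf : ContDiff ℝ (⊤ : ℕ∞) f) (a b : Ix) :
    Differentiable ℝ (fun q => f q a b) :=
  ((contDiff_pi.mp (contDiff_pi.mp hf a) b).differentiable (by simp))

lemma pd_congr {i : Ix} {f g : Sca} (h : ∀ q, f q = g q) : pd i f = pd i g := by
  have : f = g := funext h
  rw [this]

lemma pd_const (i : Ix) (c : ℝ) : pd i (fun _ => c) = 0 := by
  unfold pd; funext p; simp [fderiv_fun_const]

lemma pd_add {f g : Sca} (hf : Differentiable ℝ f) (hg : Differentiable ℝ g) (i : Ix) (p : Pt) :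
    pd i (fun q => f q + g q) p = pd i f p + pd i g p := by
  unfold pd
  rw [fderiv_fun_add (hf p) (hg p)]
  simp

lemma pd_mul {f g : Sca} (hf : Differentiable ℝ f) (hg : Differentiable ℝ g) (i : Ix) (p : Pt) :
    pd i (fun q => f q * g q) p = f p * pd i g p + g p * pd i f p := by
  unfold pd
  rw [fderiv_fun_mul (hf p) (hg p)]
  simp

lemma pd_sum {F : Ix → Sca} (hf : ∀ j, Differentiable ℝ (F j)) (i : Ix) (p : Pt) :
    pd i (fun q => ∑ j, F j q) p = ∑ j, pd i (F j) p := by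
  unfold pd
  rw [fderiv_fun_sum (fun j _ => (hf j p))]
  simp

end Aux
section Aux2
variable (S : ClassicalSpacetime)

lemma orth' (p : Pt) (m : Ix) : ∑ n, S.t p n * S.h p m n = 0 := by
  have := S.orth p m
  calc ∑ n, S.t p n * S.h p m n = ∑ n, S.t p n * S.h p n m := by
        refine Finset.sum_congr rfl fun n _ => by rw [S.h_symm]
    _ = 0 := S.orth p m

lemma pd_orth (p : Pt) (m b : Ix) :
    ∑ k, S.t p k * pd m (fun q => S.h q k b) p
      = - ∑ k, S.h p k b * pd m (fun q => S.t q k) p := by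
  have hz : pd m (fun q => ∑ k, S.t q k * S.h q k b) p = 0 := by
    rw [pd_congr (fun q => S.orth q b), pd_const]; rfl
  rw [pd_sum (F := fun k q => S.t q k * S.h q k b) (fun k => ((diffV S.smooth_t k).mul (diffT2 S.smooth_h k b)))] at hz
  have he : ∀ k ∈ Finset.univ, pd m (fun q => S.t q k * S.h q k b) p
      = S.t p k * pd m (fun q => S.h q k b) p + S.h p k b * pd m (fun q => S.t q k) p :=
    fun k _ => pd_mul (diffV S.smooth_t k) (diffT2 S.smooth_h k b) m p
  rw [Finset.sum_congr rfl he, Finset.sum_add_distrib] at hz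
  linarith

/-- closedness in terms of components (trivial restatement) -/
lemma ker_pair (p : Pt) (v w : Ix → ℝ) (hv : ∀ a, ∑ b, S.h p a b * v b = 0)
    (hw : ∑ n, S.t p n * w n = 0) : ∑ n, v n * w n = 0 := by
  obtain ⟨c, hc⟩ := (S.h_ker p v).mp hv
  subst hc
  calc ∑ n, (c • S.t p) n * w n = c * ∑ n, S.t p n * w n := by
        rw [Finset.mul_sum]; exact Finset.sum_congr rfl fun n _ => by simp [mul_assoc]
    _ = 0 := by rw [hw, mul_zero]

/-- t-contraction of covariant derivative of a vector field -/
lemma t_covV (Γ : Conn) (ξ : Vec) (hξ : ContDiff ℝ (⊤ : ℕ∞) ξ) (p : Pt) (m : Ix) :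
    ∑ n, S.t p n * covV Γ ξ p n m
      = pd m (fun q => ∑ n, S.t q n * ξ q n) p - ∑ n, ξ p n * covC Γ S.t p m n := by
  have hpd : pd m (fun q => ∑ n, S.t q n * ξ q n) p
      = ∑ n, (S.t p n * pd m (fun q => ξ q n) p + ξ p n * pd m (fun q => S.t q n) p) := by
    rw [pd_sum (F := fun n q => S.t q n * ξ q n) (fun n => ((diffV S.smooth_t n).mul (diffV hξ n)))]
    exact Finset.sum_congr rfl fun n _ => pd_mul (diffV S.smooth_t n) (diffV hξ n) m p
  unfold covV covC
  rw [hpd]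
  rw [Finset.sum_add_distrib]
  have h1 : ∑ n, S.t p n * (pd m (fun q => ξ q n) p + ∑ k, Γ p n m k * ξ p k)
      = ∑ n, S.t p n * pd m (fun q => ξ q n) p + ∑ n, ∑ k, S.t p n * (Γ p n m k * ξ p k) := by
    rw [← Finset.sum_add_distrib]
    exact Finset.sum_congr rfl fun n _ => by rw [mul_add, Finset.mul_sum]
  rw [h1]
  have h2 : ∑ n, ξ p n * (pd m (fun q => S.t q n) p - ∑ k, Γ p k m n * S.t p k)
      = ∑ n, ξ p n * pd m (fun q => S.t q n) p - ∑ n, ∑ k, ξ p n * (Γ p k m n * S.t p k) := by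
    rw [← Finset.sum_sub_distrib]
    exact Finset.sum_congr rfl fun n _ => by rw [mul_sub, Finset.mul_sum]
  rw [h2]
  have h3 : ∑ n, ∑ k, S.t p n * (Γ p n m k * ξ p k)
      = ∑ n, ∑ k, ξ p n * (Γ p k m n * S.t p k) := by
    rw [Finset.sum_comm]
    exact Finset.sum_congr rfl fun n _ => Finset.sum_congr rfl fun k _ => by ring
  rw [h3]; ring

end Aux2
section Aux3
variable (S : ClassicalSpacetime)

/-- A^{abc} = h^{ak} C^b_{kr} h^{rc} with C = Γ - Γ'. -/
noncomputable def Aten (Γ Γ' : Conn) : Pt → Ix → Ix → Ix → ℝ :=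
  fun p a b c => ∑ k, ∑ r, S.h p a k * (Γ p b k r - Γ' p b k r) * S.h p r c

lemma conn_symm {Γ : Conn} (htf : TorsionFree Γ) (p : Pt) (a b c : Ix) :
    Γ p a b c = Γ p a c b := by
  have := htf p a b c
  unfold torsion at this
  linarith

lemma Aswap (Γ Γ' : Conn) (htf : TorsionFree Γ) (htf' : TorsionFree Γ') (p : Pt) (a b c : Ix) :
    Aten S Γ Γ' p a b c = Aten S Γ Γ' p c b a := by
  unfold Aten
  rw [Finset.sum_comm]
  refine Finset.sum_congr rfl fun r _ => Finset.sum_congr rfl fun k _ => ?_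
  rw [conn_symm htf p b r k, conn_symm htf' p b r k, S.h_symm p a k, S.h_symm p r c]
  ring

lemma GA (Γ Γ' : Conn) (htf : TorsionFree Γ) (htf' : TorsionFree Γ')
    (hsp : ∀ p a b c, ∑ n, S.h p a n * covT20 Γ' S.h p n b c = 0) (p : Pt) (a b c : Ix) :
    ∑ n, S.h p n a * covT20 Γ S.h p n b c
      = Aten S Γ Γ' p a b c + Aten S Γ Γ' p b c a := by
  have h0 : ∑ n, S.h p a n * covT20 Γ' S.h p n b c = 0 := hsp p a b c
  have key : ∑ n, S.h p n a * covT20 Γ S.h p n b c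
      = ∑ n, S.h p a n * covT20 Γ' S.h p n b c
        + (∑ n, ∑ m, S.h p a n * ((Γ p b n m - Γ' p b n m) * S.h p m c)
          + ∑ n, ∑ m, S.h p a n * ((Γ p c n m - Γ' p c n m) * S.h p b m)) := by
    rw [← Finset.sum_add_distrib, ← Finset.sum_add_distrib]
    refine Finset.sum_congr rfl fun n _ => ?_
    rw [S.h_symm p n a]
    unfold covT20
    have e1 : ∑ m, S.h p a n * ((Γ p b n m - Γ' p b n m) * S.h p m c)
        = (∑ m, S.h p a n * (Γ p b n m * S.h p m c))
          - ∑ m, S.h p a n * (Γ' p b n m * S.h p m c) := by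
      rw [← Finset.sum_sub_distrib]
      exact Finset.sum_congr rfl fun m _ => by ring
    have e2 : ∑ m, S.h p a n * ((Γ p c n m - Γ' p c n m) * S.h p b m)
        = (∑ m, S.h p a n * (Γ p c n m * S.h p b m))
          - ∑ m, S.h p a n * (Γ' p c n m * S.h p b m) := by
      rw [← Finset.sum_sub_distrib]
      exact Finset.sum_congr rfl fun m _ => by ring
    rw [e1, e2, mul_add, mul_add, mul_add, mul_add, Finset.mul_sum, Finset.mul_sum,
      Finset.mul_sum, Finset.mul_sum]
    ring
  rw [key, h0, zero_add]
  congr 1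
  · unfold Aten
    refine Finset.sum_congr rfl fun n _ => Finset.sum_congr rfl fun m _ => by ring
  · unfold Aten
    rw [Finset.sum_comm]
    refine Finset.sum_congr rfl fun n _ => Finset.sum_congr rfl fun m _ => ?_
    rw [conn_symm htf p c m n, conn_symm htf' p c m n, S.h_symm p m a]
    ring

end Aux3
section Aux4
variable (S : ClassicalSpacetime)

lemma sum3_factor (f : Ix → Ix → ℝ) (g : Ix → ℝ) (w : Ix → Ix → ℝ) :
    ∑ n, ∑ m, ∑ r, f n m * g r * w m r
      = ∑ m, (∑ n, f n m) * (∑ r, g r * w m r) := by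
  rw [Finset.sum_comm]
  refine Finset.sum_congr rfl fun m _ => ?_
  rw [Finset.sum_mul]
  refine Finset.sum_congr rfl fun n _ => ?_
  rw [Finset.mul_sum]
  exact Finset.sum_congr rfl fun r _ => by ring

lemma sum_proj (t ξv X : Ix → ℝ) (a : Ix) :
    ∑ m, ((if a = m then (1:ℝ) else 0) - t m * ξv a) * X m
      = X a - ξv a * ∑ m, t m * X m := by
  have e : ∀ m, ((if a = m then (1:ℝ) else 0) - t m * ξv a) * X m
      = (if a = m then X m else 0) - ξv a * (t m * X m) := by
    intro m; split_ifs <;> ring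
  rw [Finset.sum_congr rfl fun m _ => e m, Finset.sum_sub_distrib, ← Finset.mul_sum,
    Finset.sum_ite_eq Finset.univ a X]
  simp

lemma tcovT20 (Γ' : Conn) (p : Pt) (n b : Ix) :
    ∑ c, S.t p c * covT20 Γ' S.h p n b c = - ∑ m, S.h p b m * covC Γ' S.t p n m := by
  unfold covT20 covC
  have expand : ∑ c, S.t p c * (pd n (fun q => S.h q b c) p
        + ∑ m, Γ' p b n m * S.h p m c + ∑ m, Γ' p c n m * S.h p b m)
      = (∑ c, S.t p c * pd n (fun q => S.h q b c) p)
        + (∑ c, ∑ m, S.t p c * (Γ' p b n m * S.h p m c))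
        + (∑ c, ∑ m, S.t p c * (Γ' p c n m * S.h p b m)) := by
    rw [← Finset.sum_add_distrib, ← Finset.sum_add_distrib]
    refine Finset.sum_congr rfl fun c _ => ?_
    rw [mul_add, mul_add, Finset.mul_sum, Finset.mul_sum]
  rw [expand]
  have T1 : ∑ c, S.t p c * pd n (fun q => S.h q b c) p
      = - ∑ c, S.h p c b * pd n (fun q => S.t q c) p := by
    rw [Finset.sum_congr rfl fun c _ => by
      rw [pd_congr (fun q => by rw [S.h_symm q b c] : ∀ q, S.h q b c = S.h q c b)]]
    exact pd_orth S p n b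
  have T2 : ∑ c, ∑ m, S.t p c * (Γ' p b n m * S.h p m c) = 0 := by
    rw [Finset.sum_comm]
    refine Finset.sum_eq_zero fun m _ => ?_
    have : ∑ c, S.t p c * (Γ' p b n m * S.h p m c)
        = Γ' p b n m * ∑ c, S.t p c * S.h p m c := by
      rw [Finset.mul_sum]; exact Finset.sum_congr rfl fun c _ => by ring
    rw [this, orth' S p m, mul_zero]
  have T3 : ∑ c, ∑ m, S.t p c * (Γ' p c n m * S.h p b m)
      = ∑ m, S.h p b m * ∑ c, Γ' p c n m * S.t p c := by
    rw [Finset.sum_comm]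
    refine Finset.sum_congr rfl fun m _ => ?_
    rw [Finset.mul_sum]
    exact Finset.sum_congr rfl fun c _ => by ring
  rw [T1, T2, T3, add_zero, ← Finset.sum_neg_distrib, ← Finset.sum_add_distrib,
    ← Finset.sum_neg_distrib]
  refine Finset.sum_congr rfl fun m _ => ?_
  rw [S.h_symm p m b]
  ring
end Aux4
section Aux5
variable (S : ClassicalSpacetime)

lemma hhQ' (Γ' : Conn)
    (hsp : ∀ p a b c, ∑ n, S.h p a n * covT20 Γ' S.h p n b c = 0) (p : Pt) (a b : Ix) :
    ∑ r, S.h p b r * ∑ k, S.h p a k * covC Γ' S.t p k r = 0 := by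
  have h0 : ∑ n, S.h p a n * ∑ c, S.t p c * covT20 Γ' S.h p n b c = 0 := by
    calc ∑ n, S.h p a n * ∑ c, S.t p c * covT20 Γ' S.h p n b c
        = ∑ n, ∑ c, S.t p c * (S.h p a n * covT20 Γ' S.h p n b c) := by
          refine Finset.sum_congr rfl fun n _ => ?_
          rw [Finset.mul_sum]
          exact Finset.sum_congr rfl fun c _ => by ring
      _ = ∑ c, S.t p c * ∑ n, S.h p a n * covT20 Γ' S.h p n b c := by
          rw [Finset.sum_comm]
          exact Finset.sum_congr rfl fun c _ => by rw [Finset.mul_sum]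
      _ = 0 := Finset.sum_eq_zero fun c _ => by rw [hsp p a b c, mul_zero]
  have h1 : ∑ n, S.h p a n * ∑ m, S.h p b m * covC Γ' S.t p n m = 0 := by
    have e : ∀ n, S.h p a n * ∑ m, S.h p b m * covC Γ' S.t p n m
        = - (S.h p a n * ∑ c, S.t p c * covT20 Γ' S.h p n b c) := fun n => by
      rw [tcovT20 S Γ' p n b]; ring
    rw [Finset.sum_congr rfl fun n _ => e n, Finset.sum_neg_distrib, h0, neg_zero]
  calc ∑ r, S.h p b r * ∑ k, S.h p a k * covC Γ' S.t p k r
      = ∑ r, ∑ k, S.h p b r * (S.h p a k * covC Γ' S.t p k r) :=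
        Finset.sum_congr rfl fun r _ => by rw [Finset.mul_sum]
    _ = ∑ k, ∑ r, S.h p b r * (S.h p a k * covC Γ' S.t p k r) := Finset.sum_comm
    _ = ∑ n, S.h p a n * ∑ m, S.h p b m * covC Γ' S.t p n m := by
        refine Finset.sum_congr rfl fun k _ => ?_
        rw [Finset.mul_sum]
        exact Finset.sum_congr rfl fun r _ => by ring
    _ = 0 := h1

lemma spatialD_simp (ξ : Vec) (hh : Ten2) (Γ' : Conn) (σ : Vec)
    (hproj : IsProjector S ξ hh)
    (hsp : ∀ p a b c, ∑ n, S.h p a n * covT20 Γ' S.h p n b c = 0)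
    (hσs : ContDiff ℝ (⊤ : ℕ∞) σ) (hσ : Spacelike S σ) (p : Pt) (a b : Ix) :
    spatialD S ξ hh Γ' σ p a b = ∑ k, S.h p a k * covV Γ' σ p b k := by
  set W : Ix → Ix → ℝ := fun m r => ∑ k, S.h p m k * covV Γ' σ p r k with hW
  have tW : ∀ r, ∑ m, S.t p m * W m r = 0 := by
    intro r
    calc ∑ m, S.t p m * W m r
        = ∑ m, ∑ k, (S.t p m * S.h p m k) * covV Γ' σ p r k := by
          refine Finset.sum_congr rfl fun m _ => ?_
          rw [hW, Finset.mul_sum]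
          exact Finset.sum_congr rfl fun k _ => by ring
      _ = ∑ k, (∑ m, S.t p m * S.h p m k) * covV Γ' σ p r k := by
          rw [Finset.sum_comm]
          exact Finset.sum_congr rfl fun k _ => by rw [Finset.sum_mul]
      _ = 0 := Finset.sum_eq_zero fun k _ => by rw [S.orth p k, zero_mul]
  have tW2 : ∑ r, S.t p r * W a r = 0 := by
    have e : ∀ k, ∑ r, S.t p r * covV Γ' σ p r k = - ∑ r, σ p r * covC Γ' S.t p k r := by
      intro k
      rw [t_covV S Γ' σ hσs p k, pd_congr (fun q => hσ q), pd_const]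
      simp
    have e2 : ∀ k, S.h p a k * (-∑ r, σ p r * covC Γ' S.t p k r)
        = ∑ r, -(σ p r * (S.h p a k * covC Γ' S.t p k r)) := by
      intro k
      rw [mul_neg, Finset.mul_sum, ← Finset.sum_neg_distrib]
      exact Finset.sum_congr rfl fun r _ => by ring
    calc ∑ r, S.t p r * W a r
        = ∑ r, ∑ k, S.h p a k * (S.t p r * covV Γ' σ p r k) := by
          refine Finset.sum_congr rfl fun r _ => ?_
          rw [hW, Finset.mul_sum]
          exact Finset.sum_congr rfl fun k _ => by ring
      _ = ∑ k, S.h p a k * ∑ r, S.t p r * covV Γ' σ p r k := by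
          rw [Finset.sum_comm]
          exact Finset.sum_congr rfl fun k _ => by rw [Finset.mul_sum]
      _ = ∑ k, ∑ r, -(σ p r * (S.h p a k * covC Γ' S.t p k r)) :=
          Finset.sum_congr rfl fun k _ => by rw [e k, e2 k]
      _ = ∑ r, -(σ p r * ∑ k, S.h p a k * covC Γ' S.t p k r) := by
          rw [Finset.sum_comm]
          refine Finset.sum_congr rfl fun r _ => ?_
          rw [Finset.sum_neg_distrib, Finset.mul_sum]
      _ = 0 := by
          have hv : ∀ c, ∑ r, S.h p c r * (∑ k, S.h p a k * covC Γ' S.t p k r) = 0 :=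
            fun c => hhQ' S Γ' hsp p a c
          have hk : ∑ n, (∑ k, S.h p a k * covC Γ' S.t p k n) * σ p n = 0 :=
            ker_pair S p (fun r => ∑ k, S.h p a k * covC Γ' S.t p k r) (σ p) hv (hσ p)
          rw [Finset.sum_congr rfl fun r _ =>
            (by ring : -(σ p r * ∑ k, S.h p a k * covC Γ' S.t p k r)
              = -((∑ k, S.h p a k * covC Γ' S.t p k r) * σ p r)),
            Finset.sum_neg_distrib, hk, neg_zero]
  have inner : ∀ m, ∑ r, ((if b = r then (1:ℝ) else 0) - S.t p r * ξ p b) * W m r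
      = W m b - ξ p b * ∑ r, S.t p r * W m r := fun m => sum_proj (S.t p) (ξ p) (W m) b
  have P1 : ∀ m, ∑ n, S.h p n a * hh p n m = (if a = m then (1:ℝ) else 0) - S.t p m * ξ p a := by
    intro m
    rw [Finset.sum_congr rfl fun n _ => by rw [S.h_symm p n a]]
    exact hproj.2.2 p a m
  calc spatialD S ξ hh Γ' σ p a b
      = ∑ m, ((if a = m then (1:ℝ) else 0) - S.t p m * ξ p a)
          * (W m b - ξ p b * ∑ r, S.t p r * W m r) := by
        refine Eq.trans (sum3_factor (fun n m => S.h p n a * hh p n m)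
          (fun r => ∑ s, S.h p b s * hh p s r) W) ?_
        refine Finset.sum_congr rfl fun m _ => ?_
        rw [P1 m, ← inner m]
        congr 1
        exact Finset.sum_congr rfl fun r _ => by rw [hproj.2.2 p b r]
    _ = (W a b - ξ p b * ∑ r, S.t p r * W a r)
          - ξ p a * ∑ m, S.t p m * (W m b - ξ p b * ∑ r, S.t p r * W m r) :=
        sum_proj (S.t p) (ξ p) (fun m => W m b - ξ p b * ∑ r, S.t p r * W m r) a
    _ = W a b := by
        have swap : ∑ m, S.t p m * ∑ r, S.t p r * W m r
            = ∑ r, S.t p r * ∑ m, S.t p m * W m r := by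
          calc ∑ m, S.t p m * ∑ r, S.t p r * W m r
              = ∑ m, ∑ r, S.t p r * (S.t p m * W m r) := by
                refine Finset.sum_congr rfl fun m _ => ?_
                rw [Finset.mul_sum]
                exact Finset.sum_congr rfl fun r _ => by ring
            _ = ∑ r, S.t p r * ∑ m, S.t p m * W m r := by
                rw [Finset.sum_comm]
                exact Finset.sum_congr rfl fun r _ => by rw [Finset.mul_sum]
        have z : ∑ m, S.t p m * (W m b - ξ p b * ∑ r, S.t p r * W m r) = 0 := by
          rw [Finset.sum_congr rfl fun m _ =>
            (by ring : S.t p m * (W m b - ξ p b * ∑ r, S.t p r * W m r)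
              = S.t p m * W m b - ξ p b * (S.t p m * ∑ r, S.t p r * W m r)),
            Finset.sum_sub_distrib, ← Finset.mul_sum, tW b, swap,
            Finset.sum_eq_zero (fun r _ => by rw [tW r, mul_zero])]
          simp
        rw [tW2, z, mul_zero, sub_zero, mul_zero, sub_zero]
    _ = ∑ k, S.h p a k * covV Γ' σ p b k := rfl
end Aux5
section Aux6
variable (S : ClassicalSpacetime) (Γ : Conn)

lemma covV_add (ξ η : Vec) (hξ : ContDiff ℝ (⊤ : ℕ∞) ξ) (hη : ContDiff ℝ (⊤ : ℕ∞) η) (p : Pt) (a m : Ix) :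
    covV Γ (ξ + η) p a m = covV Γ ξ p a m + covV Γ η p a m := by
  unfold covV
  rw [show (fun q => (ξ + η) q a) = fun q => ξ q a + η q a from rfl,
    pd_add (diffV hξ a) (diffV hη a)]
  rw [show (∑ n, Γ p a m n * (ξ + η) p n) = ∑ n, (Γ p a m n * ξ p n + Γ p a m n * η p n)
    from Finset.sum_congr rfl fun n _ => by show Γ p a m n * (ξ p n + η p n) = _; ring,
    Finset.sum_add_distrib]
  ring

lemma rot_add (ξ η : Vec) (hξ : ContDiff ℝ (⊤ : ℕ∞) ξ) (hη : ContDiff ℝ (⊤ : ℕ∞) η) :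
    rotOf S Γ (ξ + η) = rotOf S Γ ξ + rotOf S Γ η := by
  funext p a b
  show rotOf S Γ (ξ + η) p a b = rotOf S Γ ξ p a b + rotOf S Γ η p a b
  unfold rotOf
  rw [Finset.sum_congr rfl fun n _ => (by rw [covV_add Γ ξ η hξ hη p b n]; ring :
        S.h p n a * covV Γ (ξ + η) p b n
          = S.h p n a * covV Γ ξ p b n + S.h p n a * covV Γ η p b n),
    Finset.sum_congr rfl fun n _ => (by rw [covV_add Γ ξ η hξ hη p a n]; ring :
        S.h p n b * covV Γ (ξ + η) p a n
          = S.h p n b * covV Γ ξ p a n + S.h p n b * covV Γ η p a n),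
    Finset.sum_add_distrib, Finset.sum_add_distrib]
  ring

lemma covV_mul (α : Sca) (ξ : Vec) (hα : ContDiff ℝ (⊤ : ℕ∞) α) (hξ : ContDiff ℝ (⊤ : ℕ∞) ξ)
    (p : Pt) (x m : Ix) :
    covV Γ (fun q c => α q * ξ q c) p x m = α p * covV Γ ξ p x m + ξ p x * pd m α p := by
  unfold covV
  rw [pd_mul (hα.differentiable (by simp)) (diffV hξ x) m p,
    show (∑ n, Γ p x m n * (α p * ξ p n)) = α p * ∑ n, Γ p x m n * ξ p n by
      rw [Finset.mul_sum]; exact Finset.sum_congr rfl fun n _ => by ring]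
  ring

lemma rot_mul (α : Sca) (ξ : Vec) (hα : ContDiff ℝ (⊤ : ℕ∞) α) (hξ : ContDiff ℝ (⊤ : ℕ∞) ξ)
    (p : Pt) (a b : Ix) :
    rotOf S Γ (fun q c => α q * ξ q c) p a b
      = α p * rotOf S Γ ξ p a b
        + (1/2) * (ξ p b * (∑ n, S.h p a n * pd n α p)
            - ξ p a * (∑ n, S.h p b n * pd n α p)) := by
  have K : ∀ x y : Ix, ∑ n, S.h p n x * covV Γ (fun q c => α q * ξ q c) p y n
      = α p * ∑ n, S.h p n x * covV Γ ξ p y n + ξ p y * ∑ n, S.h p x n * pd n α p := by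
    intro x y
    rw [Finset.mul_sum, Finset.mul_sum, ← Finset.sum_add_distrib]
    refine Finset.sum_congr rfl fun n _ => ?_
    rw [covV_mul Γ α ξ hα hξ p y n, S.h_symm p x n]
    ring
  unfold rotOf
  rw [K a b, K b a]
  ring

lemma rot_antisymm (ξ : Vec) (p : Pt) (a b : Ix) :
    rotOf S Γ ξ p a b = - rotOf S Γ ξ p b a := by
  unfold rotOf; ring

lemma rot_t (ξ : Vec) (hξ : ContDiff ℝ (⊤ : ℕ∞) ξ) (p : Pt) (b : Ix) :
    ∑ n, S.t p n * rotOf S Γ ξ p n b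
      = -(1/2) * ∑ m, S.h p m b *
          (pd m (fun q => ∑ n, S.t q n * ξ q n) p - ∑ n, ξ p n * covC Γ S.t p m n) := by
  unfold rotOf
  rw [Finset.sum_congr rfl fun n _ =>
     (by ring : S.t p n * ((1/2) * (∑ m, S.h p m n * covV Γ ξ p b m
          - ∑ m, S.h p m b * covV Γ ξ p n m))
        = (1/2) * (S.t p n * ∑ m, S.h p m n * covV Γ ξ p b m)
          - (1/2) * (S.t p n * ∑ m, S.h p m b * covV Γ ξ p n m)),
    Finset.sum_sub_distrib, ← Finset.mul_sum, ← Finset.mul_sum]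
  have T1 : ∑ n, S.t p n * ∑ m, S.h p m n * covV Γ ξ p b m = 0 := by
    calc ∑ n, S.t p n * ∑ m, S.h p m n * covV Γ ξ p b m
        = ∑ n, ∑ m, (S.t p n * S.h p m n) * covV Γ ξ p b m := by
          refine Finset.sum_congr rfl fun n _ => ?_
          rw [Finset.mul_sum]
          exact Finset.sum_congr rfl fun m _ => by ring
      _ = ∑ m, (∑ n, S.t p n * S.h p m n) * covV Γ ξ p b m := by
          rw [Finset.sum_comm]
          exact Finset.sum_congr rfl fun m _ => by rw [Finset.sum_mul]
      _ = 0 := Finset.sum_eq_zero fun m _ => by rw [orth' S p m, zero_mul]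
  have T2 : ∑ n, S.t p n * ∑ m, S.h p m b * covV Γ ξ p n m
      = ∑ m, S.h p m b * ∑ n, S.t p n * covV Γ ξ p n m := by
    calc ∑ n, S.t p n * ∑ m, S.h p m b * covV Γ ξ p n m
        = ∑ n, ∑ m, S.h p m b * (S.t p n * covV Γ ξ p n m) := by
          refine Finset.sum_congr rfl fun n _ => ?_
          rw [Finset.mul_sum]
          exact Finset.sum_congr rfl fun m _ => by ring
      _ = ∑ m, S.h p m b * ∑ n, S.t p n * covV Γ ξ p n m := by
          rw [Finset.sum_comm]
          exact Finset.sum_congr rfl fun m _ => by rw [Finset.mul_sum]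
  rw [T1, T2, Finset.sum_congr rfl fun m _ => by rw [t_covV S Γ ξ hξ p m]]
  ring
end Aux6
section Aux7
variable (S : ClassicalSpacetime)

/-- squared norm of t -/
noncomputable def tsq (S : ClassicalSpacetime) : Sca := fun q => ∑ j, (S.t q j)^2

lemma tsq_pos (q : Pt) : 0 < tsq S q := by
  obtain ⟨j, hj⟩ : ∃ j, S.t q j ≠ 0 := by
    by_contra hcon
    push_neg at hcon
    exact S.t_ne q (funext hcon)
  exact Finset.sum_pos' (fun i _ => sq_nonneg _)
    ⟨j, Finset.mem_univ j, by positivity⟩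

lemma tsq_smooth : ContDiff ℝ (⊤ : ℕ∞) (tsq S) := by
  unfold tsq
  exact ContDiff.sum fun j _ => (contDiff_pi.mp S.smooth_t j).pow 2

/-- the canonical unit timelike field ξ = t/‖t‖² -/
noncomputable def xiz (S : ClassicalSpacetime) : Vec := fun q i => S.t q i / tsq S q

lemma xiz_smooth : ContDiff ℝ (⊤ : ℕ∞) (xiz S) := by
  refine contDiff_pi.mpr fun i => ?_
  exact (contDiff_pi.mp S.smooth_t i).div (tsq_smooth S) fun q => (tsq_pos S q).ne'

lemma xiz_unit (q : Pt) : ∑ n, S.t q n * xiz S q n = 1 := by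
  unfold xiz
  rw [Finset.sum_congr rfl fun n _ =>
    (by rw [sq]; ring : S.t q n * (S.t q n / tsq S q) = (S.t q n)^2 / tsq S q),
    ← Finset.sum_div]
  exact div_self (tsq_pos S q).ne'

lemma h_xiz (q : Pt) (a : Ix) : ∑ n, S.h q a n * xiz S q n = 0 := by
  unfold xiz
  rw [Finset.sum_congr rfl fun n _ =>
    (by ring : S.h q a n * (S.t q n / tsq S q) = (S.t q n * S.h q a n) / tsq S q),
    ← Finset.sum_div, orth' S q a, zero_div]

lemma xiz_t_symm (q : Pt) (a b : Ix) : S.t q a * xiz S q b = S.t q b * xiz S q a := by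
  unfold xiz; ring

/-- the matrix h + t⊗t -/
noncomputable def Hmat (S : ClassicalSpacetime) (p : Pt) : Matrix Ix Ix ℝ :=
  Matrix.of fun i j => S.h p i j + S.t p i * S.t p j

lemma psd_kernel (p : Pt) (x : Ix → ℝ) (hx : ∑ a, ∑ b, S.h p a b * x a * x b = 0) :
    ∀ i, ∑ j, S.h p i j * x j = 0 := by
  intro i
  set y : Ix → ℝ := Pi.single i 1 with hy
  set Bv : ℝ := ∑ a, ∑ b, S.h p a b * x a * y b with hB
  set qv : ℝ := ∑ a, ∑ b, S.h p a b * y a * y b with hq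
  have pull : ∀ (c : ℝ) (F : Ix → Ix → ℝ), ∑ a, ∑ b, c * F a b = c * ∑ a, ∑ b, F a b := by
    intro c F
    rw [Finset.mul_sum]
    exact Finset.sum_congr rfl fun a _ => by rw [Finset.mul_sum]
  have yx : ∑ a, ∑ b, S.h p a b * y a * x b = Bv := by
    rw [hB, Finset.sum_comm]
    exact Finset.sum_congr rfl fun b _ => Finset.sum_congr rfl fun a _ => by
      rw [S.h_symm p b a]; ring
  have expand : ∀ s : ℝ, ∑ a, ∑ b, S.h p a b * (x a + s * y a) * (x b + s * y b)
      = 2 * s * Bv + s^2 * qv := by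
    intro s
    have e : ∀ a b, S.h p a b * (x a + s * y a) * (x b + s * y b)
        = S.h p a b * x a * x b + s * (S.h p a b * x a * y b)
          + (s * (S.h p a b * y a * x b) + s^2 * (S.h p a b * y a * y b)) := fun a b => by ring
    rw [Finset.sum_congr rfl fun a _ => Finset.sum_congr rfl fun b _ => e a b]
    simp only [Finset.sum_add_distrib]
    rw [pull s, pull s, pull (s^2), hx, yx, ← hB, ← hq]
    ring
  have hper : ∀ s : ℝ, 0 ≤ 2 * s * Bv + s^2 * qv := fun s => by
    rw [← expand s]; exact S.h_psd p _
  have hq0 : 0 ≤ qv := S.h_psd p y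
  have hB0 : Bv = 0 := by
    rcases eq_or_lt_of_le hq0 with hq1 | hq1
    · have h1 := hper 1
      have h2 := hper (-1)
      rw [← hq1] at h1 h2
      simp at h1 h2
      linarith
    · have h1 := hper (-Bv / qv)
      have he' : 2 * (-Bv / qv) * Bv + (-Bv / qv)^2 * qv = -Bv^2 / qv := by
        field_simp
        ring
      rw [he'] at h1
      have h4 : 0 ≤ (-Bv^2 / qv) * qv := mul_nonneg h1 hq1.le
      rw [div_mul_cancel₀ _ hq1.ne'] at h4
      have h5 : Bv^2 = 0 := le_antisymm (by linarith) (sq_nonneg Bv)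
      exact sq_eq_zero_iff.mp h5
  have hBe : Bv = ∑ a, S.h p a i * x a := by
    rw [hB]
    refine Finset.sum_congr rfl fun a _ => ?_
    rw [hy]
    rw [Finset.sum_eq_single i (fun b _ hbne => by
      rw [Pi.single_eq_of_ne hbne]; ring) (by intro hmem; exact absurd (Finset.mem_univ i) hmem)]
    rw [Pi.single_eq_same]
    ring
  rw [hBe] at hB0
  calc ∑ j, S.h p i j * x j = ∑ j, S.h p j i * x j :=
        Finset.sum_congr rfl fun j _ => by rw [S.h_symm p i j]
    _ = 0 := hB0

lemma Hmat_posdef (p : Pt) : (Hmat S p).PosDef := by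
  rw [Matrix.posDef_iff_dotProduct_mulVec]
  constructor
  · show Matrix.conjTranspose (Hmat S p) = Hmat S p
    ext i j
    simp only [Matrix.conjTranspose_apply, star_trivial]
    show S.h p j i + S.t p j * S.t p i = S.h p i j + S.t p i * S.t p j
    rw [S.h_symm p j i]
    ring
  · intro x hx
    have hsx : star x = x := by
      funext j; exact star_trivial _
    rw [hsx]
    have he : dotProduct x ((Hmat S p).mulVec x)
        = (∑ a, ∑ b, S.h p a b * x a * x b) + (∑ j, S.t p j * x j)^2 := by
      unfold dotProduct Matrix.mulVec dotProduct
      rw [sq, Finset.sum_mul, ← Finset.sum_add_distrib]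
      refine Finset.sum_congr rfl fun a _ => ?_
      show x a * ∑ j, (S.h p a j + S.t p a * S.t p j) * x j = _
      rw [Finset.mul_sum, Finset.mul_sum, ← Finset.sum_add_distrib]
      refine Finset.sum_congr rfl fun b _ => by ring
    rw [he]
    rcases lt_or_eq_of_le (S.h_psd p x) with hlt | heq
    · have := sq_nonneg (∑ j, S.t p j * x j)
      linarith
    · have hker := psd_kernel S p x heq.symm
      obtain ⟨c, hc⟩ := (S.h_ker p x).mp hker
      have hc0 : c ≠ 0 := by
        intro h0
        apply hx
        rw [hc, h0, zero_smul]
      have hx2 : ∑ j, S.t p j * x j = c * tsq S p := by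
        rw [hc]
        unfold tsq
        rw [Finset.mul_sum]
        refine Finset.sum_congr rfl fun j _ => ?_
        have : (c • S.t p) j = c * S.t p j := rfl
        rw [this, sq]
        ring
      rw [← heq, zero_add, hx2]
      have hne : c * tsq S p ≠ 0 := mul_ne_zero hc0 (tsq_pos S p).ne'
      positivity
end Aux7
section Aux8
variable (S : ClassicalSpacetime)

noncomputable def Gmat (S : ClassicalSpacetime) (p : Pt) : Matrix Ix Ix ℝ := (Hmat S p)⁻¹

lemma Hdet (p : Pt) : IsUnit (Hmat S p).det :=
  isUnit_iff_ne_zero.mpr (ne_of_gt (Hmat_posdef S p).det_pos)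

lemma Htrans (p : Pt) : Matrix.transpose (Hmat S p) = Hmat S p := by
  ext i j
  show S.h p j i + S.t p j * S.t p i = S.h p i j + S.t p i * S.t p j
  rw [S.h_symm p j i]; ring

lemma Gsym (p : Pt) (i j : Ix) : Gmat S p i j = Gmat S p j i := by
  have : Matrix.transpose (Gmat S p) = Gmat S p := by
    unfold Gmat
    rw [Matrix.transpose_nonsing_inv, Htrans S p]
  conv_lhs => rw [← this]
  rfl

lemma HG (p : Pt) : Hmat S p * Gmat S p = 1 := Matrix.mul_nonsing_inv _ (Hdet S p)
lemma GH (p : Pt) : Gmat S p * Hmat S p = 1 := Matrix.nonsing_inv_mul _ (Hdet S p)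

lemma Hxi (p : Pt) : (Hmat S p).mulVec (xiz S p) = S.t p := by
  funext i
  show ∑ j, (S.h p i j + S.t p i * S.t p j) * xiz S p j = S.t p i
  rw [Finset.sum_congr rfl fun j _ =>
    (by ring : (S.h p i j + S.t p i * S.t p j) * xiz S p j
      = S.h p i j * xiz S p j + S.t p i * (S.t p j * xiz S p j)),
    Finset.sum_add_distrib, h_xiz S p i, ← Finset.mul_sum, xiz_unit S p]
  ring

lemma Gt (p : Pt) : (Gmat S p).mulVec (S.t p) = xiz S p := by
  rw [← Hxi S p, Matrix.mulVec_mulVec, GH, Matrix.one_mulVec]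

lemma Gt' (p : Pt) (i : Ix) : ∑ j, Gmat S p i j * S.t p j = xiz S p i := by
  have := congrFun (Gt S p) i
  exact this

/-- the spatial projector ĥ -/
noncomputable def hhat (S : ClassicalSpacetime) : Ten2 :=
  fun p a b => Gmat S p a b - xiz S p a * xiz S p b

lemma hhat_symm (p : Pt) (a b : Ix) : hhat S p a b = hhat S p b a := by
  unfold hhat
  rw [Gsym S p a b]; ring

lemma xiz_sq (p : Pt) : ∑ n, xiz S p n * xiz S p n = 1 / tsq S p := by
  have hD := (tsq_pos S p).ne'
  unfold xiz
  rw [Finset.sum_congr rfl fun n _ =>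
    (by rw [div_mul_div_comm, ← sq, ← sq] : S.t p n / tsq S p * (S.t p n / tsq S p)
      = (S.t p n)^2 / (tsq S p)^2), ← Finset.sum_div]
  rw [show (∑ n, (S.t p n)^2) = tsq S p from rfl, sq, div_mul_eq_div_div, div_self hD]

lemma hhat_xi (p : Pt) (a : Ix) : ∑ n, hhat S p a n * xiz S p n = 0 := by
  unfold hhat
  rw [Finset.sum_congr rfl fun n _ =>
    (by ring : (Gmat S p a n - xiz S p a * xiz S p n) * xiz S p n
      = Gmat S p a n * xiz S p n - xiz S p a * (xiz S p n * xiz S p n)),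
    Finset.sum_sub_distrib, ← Finset.mul_sum, xiz_sq S p]
  have : ∑ n, Gmat S p a n * xiz S p n = xiz S p a / tsq S p := by
    unfold xiz
    rw [Finset.sum_congr rfl fun n _ =>
      (by ring : Gmat S p a n * (S.t p n / tsq S p) = (Gmat S p a n * S.t p n) / tsq S p),
      ← Finset.sum_div, Gt' S p a]
    rfl
  rw [this]
  unfold xiz
  ring

lemma h_hhat (p : Pt) (a b : Ix) :
    ∑ n, S.h p a n * hhat S p n b = (if a = b then (1:ℝ) else 0) - S.t p b * xiz S p a := by
  unfold hhat
  rw [Finset.sum_congr rfl fun n _ =>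
    (by ring : S.h p a n * (Gmat S p n b - xiz S p n * xiz S p b)
      = S.h p a n * Gmat S p n b - (S.h p a n * xiz S p n) * xiz S p b),
    Finset.sum_sub_distrib, ← Finset.sum_mul, h_xiz S p a, zero_mul, sub_zero]
  have key : ∑ n, S.h p a n * Gmat S p n b
      = (if a = b then (1:ℝ) else 0) - S.t p a * xiz S p b := by
    have e : ∀ n, S.h p a n * Gmat S p n b
        = Hmat S p a n * Gmat S p n b - S.t p a * (S.t p n * Gmat S p n b) := by
      intro n
      show S.h p a n * Gmat S p n b
        = (S.h p a n + S.t p a * S.t p n) * Gmat S p n b - S.t p a * (S.t p n * Gmat S p n b)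
      ring
    rw [Finset.sum_congr rfl fun n _ => e n, Finset.sum_sub_distrib, ← Finset.mul_sum]
    have hHG : ∑ n, Hmat S p a n * Gmat S p n b = (if a = b then (1:ℝ) else 0) := by
      have := congrFun (congrFun (HG S p) a) b
      rw [Matrix.mul_apply] at this
      rw [this, Matrix.one_apply]
    have hGt : ∑ n, S.t p n * Gmat S p n b = xiz S p b := by
      rw [Finset.sum_congr rfl fun n _ => by rw [Gsym S p n b, mul_comm]]
      exact Gt' S p b
    rw [hHG, hGt]
  rw [key, xiz_t_symm S p a b]

lemma hhat_proj : IsProjector S (xiz S) (hhat S) :=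
  ⟨fun p a b => hhat_symm S p a b, fun p a => hhat_xi S p a, fun p a b => h_hhat S p a b⟩

end Aux8
section Aux9
variable (S : ClassicalSpacetime)

lemma pull2 (c : ℝ) (F : Ix → Ix → ℝ) : ∑ n, ∑ m, c * F n m = c * ∑ n, ∑ m, F n m := by
  rw [Finset.mul_sum]
  exact Finset.sum_congr rfl fun n _ => by rw [Finset.mul_sum]

lemma hhat_contract (p : Pt) (a : Ix) (F : Ix → ℝ) :
    ∑ n, ∑ k, S.h p a n * (hhat S p n k * F k)
      = F a - xiz S p a * ∑ k, S.t p k * F k := by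
  rw [Finset.sum_comm]
  rw [Finset.sum_congr rfl fun k _ => (by
      rw [Finset.sum_mul]
      exact Finset.sum_congr rfl fun n _ => by ring :
    ∑ n, S.h p a n * (hhat S p n k * F k) = (∑ n, S.h p a n * hhat S p n k) * F k)]
  rw [Finset.sum_congr rfl fun k _ => by rw [h_hhat S p a k]]
  exact sum_proj (S.t p) (xiz S p) F a

/-- T^{xyz} = h^{xm} ∂_m h^{yz} -/
noncomputable def Tt (S : ClassicalSpacetime) : Pt → Ix → Ix → Ix → ℝ :=
  fun p x y z => ∑ m, S.h p x m * pd m (fun q => S.h q y z) p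

/-- B^{xy} = h^{xm} h^{yk} ∂_m t_k -/
noncomputable def Bt (S : ClassicalSpacetime) : Pt → Ix → Ix → ℝ :=
  fun p x y => ∑ m, ∑ k, S.h p x m * (S.h p y k * pd m (fun q => S.t q k) p)

lemma Tt_symm (p : Pt) (x y z : Ix) : Tt S p x y z = Tt S p x z y := by
  unfold Tt
  refine Finset.sum_congr rfl fun m _ => ?_
  rw [pd_congr (fun q => S.h_symm q y z)]

lemma Bt_symm (p : Pt) (x y : Ix) : Bt S p x y = Bt S p y x := by
  unfold Bt
  have e1 : ∀ m k, S.h p x m * (S.h p y k * pd m (fun q => S.t q k) p)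
      = S.h p x m * (S.h p y k * pd k (fun q => S.t q m) p) := fun m k => by
    rw [S.t_closed p m k]
  rw [Finset.sum_congr rfl fun m _ => Finset.sum_congr rfl fun k _ => e1 m k,
    Finset.sum_comm]
  exact Finset.sum_congr rfl fun k _ => Finset.sum_congr rfl fun m _ => by ring

lemma D1e (p : Pt) (a b c : Ix) :
    ∑ n, ∑ m, S.h p a n * ((∑ k, hhat S p n k * pd m (fun q => S.h q k b) p) * S.h p m c)
      = Tt S p c a b + xiz S p a * Bt S p c b := by
  calc ∑ n, ∑ m, S.h p a n * ((∑ k, hhat S p n k * pd m (fun q => S.h q k b) p) * S.h p m c)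
      = ∑ m, S.h p m c * ∑ n, ∑ k, S.h p a n * (hhat S p n k * pd m (fun q => S.h q k b) p) := by
        rw [Finset.sum_comm]
        refine Finset.sum_congr rfl fun m _ => ?_
        rw [Finset.mul_sum]
        refine Finset.sum_congr rfl fun n _ => ?_
        rw [Finset.sum_mul, Finset.mul_sum, Finset.mul_sum]
        exact Finset.sum_congr rfl fun k _ => by ring
    _ = ∑ m, S.h p m c * (pd m (fun q => S.h q a b) p
          + xiz S p a * ∑ k, S.h p k b * pd m (fun q => S.t q k) p) := by
        refine Finset.sum_congr rfl fun m _ => ?_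
        rw [hhat_contract S p a (fun k => pd m (fun q => S.h q k b) p), pd_orth S p m b]
        ring
    _ = Tt S p c a b + xiz S p a * Bt S p c b := by
        unfold Tt Bt
        have hm : ∀ m, S.h p m c * (pd m (fun q => S.h q a b) p
              + xiz S p a * ∑ k, S.h p k b * pd m (fun q => S.t q k) p)
            = S.h p c m * pd m (fun q => S.h q a b) p
              + xiz S p a * ∑ k, S.h p c m * (S.h p b k * pd m (fun q => S.t q k) p) := by
          intro m
          rw [S.h_symm p m c, mul_add]
          congr 1
          rw [mul_left_comm]
          congr 1
          rw [Finset.mul_sum]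
          exact Finset.sum_congr rfl fun k _ => by rw [S.h_symm p k b]
        rw [Finset.sum_congr rfl fun m _ => hm m, Finset.sum_add_distrib, ← Finset.mul_sum]
end Aux9
section Aux10
variable (S : ClassicalSpacetime)

lemma D2e (p : Pt) (a b c : Ix) :
    ∑ n, ∑ m, S.h p a n * ((∑ k, hhat S p m k * pd n (fun q => S.h q k b) p) * S.h p m c)
      = Tt S p a c b + xiz S p c * Bt S p a b := by
  have hnm : ∀ n m, S.h p a n * ((∑ k, hhat S p m k * pd n (fun q => S.h q k b) p) * S.h p m c)
      = S.h p a n * ∑ k, S.h p c m * (hhat S p m k * pd n (fun q => S.h q k b) p) := by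
    intro n m
    congr 1
    rw [Finset.sum_mul]
    refine Finset.sum_congr rfl fun k _ => ?_
    rw [S.h_symm p c m]
    ring
  calc ∑ n, ∑ m, S.h p a n * ((∑ k, hhat S p m k * pd n (fun q => S.h q k b) p) * S.h p m c)
      = ∑ n, S.h p a n * ∑ m, ∑ k, S.h p c m * (hhat S p m k * pd n (fun q => S.h q k b) p) := by
        refine Finset.sum_congr rfl fun n _ => ?_
        rw [Finset.mul_sum]
        exact Finset.sum_congr rfl fun m _ => hnm n m
    _ = ∑ n, S.h p a n * (pd n (fun q => S.h q c b) p
          + xiz S p c * ∑ k, S.h p k b * pd n (fun q => S.t q k) p) := by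
        refine Finset.sum_congr rfl fun n _ => ?_
        rw [hhat_contract S p c (fun k => pd n (fun q => S.h q k b) p), pd_orth S p n b]
        ring
    _ = Tt S p a c b + xiz S p c * Bt S p a b := by
        unfold Tt Bt
        have hn : ∀ n, S.h p a n * (pd n (fun q => S.h q c b) p
              + xiz S p c * ∑ k, S.h p k b * pd n (fun q => S.t q k) p)
            = S.h p a n * pd n (fun q => S.h q c b) p
              + xiz S p c * ∑ k, S.h p a n * (S.h p b k * pd n (fun q => S.t q k) p) := by
          intro n
          rw [mul_add]
          congr 1
          rw [mul_left_comm]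
          congr 1
          rw [Finset.mul_sum]
          exact Finset.sum_congr rfl fun k _ => by rw [S.h_symm p k b]
        rw [Finset.sum_congr rfl fun n _ => hn n, Finset.sum_add_distrib, ← Finset.mul_sum]

lemma D3e (p : Pt) (a b c : Ix) :
    ∑ n, ∑ m, S.h p a n * ((∑ k, ∑ l, hhat S p n k * hhat S p m l
          * (∑ j, S.h p b j * pd j (fun q => S.h q k l) p)) * S.h p m c)
      = Tt S p b a c + xiz S p c * Bt S p b a + xiz S p a * Bt S p b c := by
  -- Step 1: reorganize to the double hhat-contraction form
  have step1 : ∑ n, ∑ m, S.h p a n * ((∑ k, ∑ l, hhat S p n k * hhat S p m l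
          * (∑ j, S.h p b j * pd j (fun q => S.h q k l) p)) * S.h p m c)
      = ∑ n, ∑ k, S.h p a n * (hhat S p n k
          * ∑ m, ∑ l, S.h p c m * (hhat S p m l
              * (∑ j, S.h p b j * pd j (fun q => S.h q k l) p))) := by
    refine Finset.sum_congr rfl fun n _ => ?_
    calc ∑ m, S.h p a n * ((∑ k, ∑ l, hhat S p n k * hhat S p m l
            * (∑ j, S.h p b j * pd j (fun q => S.h q k l) p)) * S.h p m c)
        = ∑ m, ∑ k, ∑ l, S.h p a n * (hhat S p n k
            * (S.h p c m * (hhat S p m l * (∑ j, S.h p b j * pd j (fun q => S.h q k l) p)))) := by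
          refine Finset.sum_congr rfl fun m _ => ?_
          rw [Finset.sum_mul, Finset.mul_sum]
          refine Finset.sum_congr rfl fun k _ => ?_
          rw [Finset.sum_mul, Finset.mul_sum]
          refine Finset.sum_congr rfl fun l _ => ?_
          rw [S.h_symm p c m]
          ring
      _ = ∑ k, ∑ m, ∑ l, S.h p a n * (hhat S p n k
            * (S.h p c m * (hhat S p m l * (∑ j, S.h p b j * pd j (fun q => S.h q k l) p)))) :=
          Finset.sum_comm
      _ = ∑ k, S.h p a n * (hhat S p n k
            * ∑ m, ∑ l, S.h p c m * (hhat S p m l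
                * (∑ j, S.h p b j * pd j (fun q => S.h q k l) p))) := by
          refine Finset.sum_congr rfl fun k _ => ?_
          calc ∑ m, ∑ l, S.h p a n * (hhat S p n k
                * (S.h p c m * (hhat S p m l * (∑ j, S.h p b j * pd j (fun q => S.h q k l) p))))
              = ∑ m, ∑ l, (S.h p a n * hhat S p n k)
                  * (S.h p c m * (hhat S p m l * (∑ j, S.h p b j * pd j (fun q => S.h q k l) p))) :=
                Finset.sum_congr rfl fun m _ => Finset.sum_congr rfl fun l _ => by ring
            _ = (S.h p a n * hhat S p n k) * ∑ m, ∑ l,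
                  S.h p c m * (hhat S p m l * (∑ j, S.h p b j * pd j (fun q => S.h q k l) p)) :=
                pull2 _ _
            _ = S.h p a n * (hhat S p n k * ∑ m, ∑ l,
                  S.h p c m * (hhat S p m l * (∑ j, S.h p b j * pd j (fun q => S.h q k l) p))) :=
                mul_assoc _ _ _
  -- the inner t-contraction of ∂h, used twice
  have hswap : ∀ k, ∑ l, S.t p l * ∑ j, S.h p b j * pd j (fun q => S.h q k l) p
      = - ∑ j, S.h p b j * ∑ l, S.h p l k * pd j (fun q => S.t q l) p := by
    intro k
    calc ∑ l, S.t p l * ∑ j, S.h p b j * pd j (fun q => S.h q k l) p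
        = ∑ l, ∑ j, S.h p b j * (S.t p l * pd j (fun q => S.h q l k) p) := by
          refine Finset.sum_congr rfl fun l _ => ?_
          rw [Finset.mul_sum]
          refine Finset.sum_congr rfl fun j _ => ?_
          rw [pd_congr (fun q => S.h_symm q k l)]
          ring
      _ = ∑ j, S.h p b j * ∑ l, S.t p l * pd j (fun q => S.h q l k) p := by
          rw [Finset.sum_comm]
          exact Finset.sum_congr rfl fun j _ => by rw [Finset.mul_sum]
      _ = ∑ j, S.h p b j * (- ∑ l, S.h p l k * pd j (fun q => S.t q l) p) :=
          Finset.sum_congr rfl fun j _ => by rw [pd_orth S p j k]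
      _ = - ∑ j, S.h p b j * ∑ l, S.h p l k * pd j (fun q => S.t q l) p := by
          rw [Finset.sum_congr rfl fun j _ =>
            (by ring : S.h p b j * (- ∑ l, S.h p l k * pd j (fun q => S.t q l) p)
              = -(S.h p b j * ∑ l, S.h p l k * pd j (fun q => S.t q l) p)),
            Finset.sum_neg_distrib]
  -- closed form of the inner double contraction
  have Ye : ∀ k, (∑ m, ∑ l, S.h p c m * (hhat S p m l
        * (∑ j, S.h p b j * pd j (fun q => S.h q k l) p)))
      = (∑ j, S.h p b j * pd j (fun q => S.h q k c) p)
        + xiz S p c * ∑ j, S.h p b j * ∑ l, S.h p l k * pd j (fun q => S.t q l) p := by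
    intro k
    refine (hhat_contract S p c fun l => ∑ j, S.h p b j * pd j (fun q => S.h q k l) p).trans ?_
    rw [hswap k]
    ring
  refine step1.trans ?_
  refine (hhat_contract S p a fun k => ∑ m, ∑ l, S.h p c m * (hhat S p m l
      * (∑ j, S.h p b j * pd j (fun q => S.h q k l) p))).trans ?_
  have Yk : ∑ k, S.t p k * (∑ m, ∑ l, S.h p c m * (hhat S p m l
        * (∑ j, S.h p b j * pd j (fun q => S.h q k l) p)))
      = ∑ k, S.t p k * ((∑ j, S.h p b j * pd j (fun q => S.h q k c) p)
          + xiz S p c * ∑ j, S.h p b j * ∑ l, S.h p l k * pd j (fun q => S.t q l) p) :=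
    Finset.sum_congr rfl fun k _ => by rw [Ye k]
  rw [Ye a, Yk]
  -- identify the four resulting pieces
  have e2 : ∑ j, S.h p b j * ∑ l, S.h p l a * pd j (fun q => S.t q l) p = Bt S p b a := by
    unfold Bt
    refine Finset.sum_congr rfl fun j _ => ?_
    rw [Finset.mul_sum]
    exact Finset.sum_congr rfl fun l _ => by rw [S.h_symm p l a]
  have e3a : ∑ k, S.t p k * (∑ j, S.h p b j * pd j (fun q => S.h q k c) p) = - Bt S p b c := by
    have flip : ∀ k, (∑ j, S.h p b j * pd j (fun q => S.h q k c) p)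
        = ∑ j, S.h p b j * pd j (fun q => S.h q c k) p := fun k =>
      Finset.sum_congr rfl fun j _ => by rw [pd_congr (fun q => S.h_symm q k c)]
    rw [Finset.sum_congr rfl fun k _ => by rw [flip k], hswap c]
    have : ∑ j, S.h p b j * ∑ l, S.h p l c * pd j (fun q => S.t q l) p = Bt S p b c := by
      unfold Bt
      refine Finset.sum_congr rfl fun j _ => ?_
      rw [Finset.mul_sum]
      exact Finset.sum_congr rfl fun l _ => by rw [S.h_symm p l c]
    rw [this]
  have e3b : ∑ k, S.t p k * ∑ j, S.h p b j * ∑ l, S.h p l k * pd j (fun q => S.t q l) p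
      = 0 := by
    calc ∑ k, S.t p k * ∑ j, S.h p b j * ∑ l, S.h p l k * pd j (fun q => S.t q l) p
        = ∑ k, ∑ j, ∑ l, (S.h p b j * pd j (fun q => S.t q l) p) * (S.t p k * S.h p l k) := by
          refine Finset.sum_congr rfl fun k _ => ?_
          rw [Finset.mul_sum]
          refine Finset.sum_congr rfl fun j _ => ?_
          rw [mul_left_comm, Finset.mul_sum, Finset.mul_sum]
          exact Finset.sum_congr rfl fun l _ => by ring
      _ = ∑ j, ∑ k, ∑ l, (S.h p b j * pd j (fun q => S.t q l) p) * (S.t p k * S.h p l k) :=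
          Finset.sum_comm
      _ = ∑ j, ∑ l, ∑ k, (S.h p b j * pd j (fun q => S.t q l) p) * (S.t p k * S.h p l k) :=
          Finset.sum_congr rfl fun j _ => Finset.sum_comm
      _ = 0 := by
          refine Finset.sum_eq_zero fun j _ => Finset.sum_eq_zero fun l _ => ?_
          rw [← Finset.mul_sum, orth' S p l, mul_zero]
  have e4 : ∑ k, S.t p k * ((∑ j, S.h p b j * pd j (fun q => S.h q k c) p)
        + xiz S p c * ∑ j, S.h p b j * ∑ l, S.h p l k * pd j (fun q => S.t q l) p)
      = - Bt S p b c := by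
    rw [Finset.sum_congr rfl fun k _ =>
      (by ring : S.t p k * ((∑ j, S.h p b j * pd j (fun q => S.h q k c) p)
            + xiz S p c * ∑ j, S.h p b j * ∑ l, S.h p l k * pd j (fun q => S.t q l) p)
        = S.t p k * (∑ j, S.h p b j * pd j (fun q => S.h q k c) p)
          + xiz S p c * (S.t p k * ∑ j, S.h p b j * ∑ l, S.h p l k
              * pd j (fun q => S.t q l) p)),
      Finset.sum_add_distrib, ← Finset.mul_sum, e3a, e3b, mul_zero, add_zero]
  rw [e2, e4]
  have e1 : (∑ j, S.h p b j * pd j (fun q => S.h q a c) p) = Tt S p b a c := rfl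
  rw [e1]
  ring
end Aux10
section Aux11
variable (S : ClassicalSpacetime)

/-- an auxiliary torsion-free spatially metric connection -/
noncomputable def Gam0 (S : ClassicalSpacetime) : Conn := fun p b n m =>
  -(1/2) * (∑ k, hhat S p n k * pd m (fun q => S.h q k b) p)
  - (1/2) * (∑ k, hhat S p m k * pd n (fun q => S.h q k b) p)
  + (1/2) * (∑ k, ∑ l, hhat S p n k * hhat S p m l
      * (∑ j, S.h p b j * pd j (fun q => S.h q k l) p))

lemma tf0 : TorsionFree (Gam0 S) := by
  intro p a b c
  unfold torsion Gam0
  have eX : ∀ k l, (∑ j, S.h p a j * pd j (fun q => S.h q l k) p)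
      = ∑ j, S.h p a j * pd j (fun q => S.h q k l) p := fun k l =>
    Finset.sum_congr rfl fun j _ => by rw [pd_congr (fun q => S.h_symm q l k)]
  have e3 : ∑ k, ∑ l, hhat S p c k * hhat S p b l
        * (∑ j, S.h p a j * pd j (fun q => S.h q k l) p)
      = ∑ k, ∑ l, hhat S p b k * hhat S p c l
        * (∑ j, S.h p a j * pd j (fun q => S.h q k l) p) := by
    rw [Finset.sum_comm]
    refine Finset.sum_congr rfl fun k _ => Finset.sum_congr rfl fun l _ => ?_
    rw [eX k l]
    ring
  rw [e3]
  ring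

lemma contrG (p : Pt) (a b c : Ix) :
    ∑ n, ∑ m, S.h p a n * (Gam0 S p b n m * S.h p m c)
      = -(1/2) * (Tt S p c a b + xiz S p a * Bt S p c b)
        - (1/2) * (Tt S p a c b + xiz S p c * Bt S p a b)
        + (1/2) * (Tt S p b a c + xiz S p c * Bt S p b a + xiz S p a * Bt S p b c) := by
  have split : ∀ n m, S.h p a n * (Gam0 S p b n m * S.h p m c)
      = -(1/2) * (S.h p a n * ((∑ k, hhat S p n k * pd m (fun q => S.h q k b) p) * S.h p m c))
        - (1/2) * (S.h p a n * ((∑ k, hhat S p m k * pd n (fun q => S.h q k b) p) * S.h p m c))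
        + (1/2) * (S.h p a n * ((∑ k, ∑ l, hhat S p n k * hhat S p m l
            * (∑ j, S.h p b j * pd j (fun q => S.h q k l) p)) * S.h p m c)) := by
    intro n m
    unfold Gam0
    ring
  rw [Finset.sum_congr rfl fun n _ => Finset.sum_congr rfl fun m _ => split n m]
  simp only [Finset.sum_add_distrib, Finset.sum_sub_distrib]
  rw [pull2, pull2, pull2, D1e S p a b c, D2e S p a b c, D3e S p a b c]

lemma hsp0 : ∀ p a b c, ∑ n, S.h p a n * covT20 (Gam0 S) S.h p n b c = 0 := by
  intro p a b c
  have expand : ∀ n, S.h p a n * covT20 (Gam0 S) S.h p n b c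
      = S.h p a n * pd n (fun q => S.h q b c) p
        + ∑ m, S.h p a n * (Gam0 S p b n m * S.h p m c)
        + ∑ m, S.h p a n * (Gam0 S p c n m * S.h p b m) := by
    intro n
    unfold covT20
    rw [mul_add, mul_add, Finset.mul_sum, Finset.mul_sum]
  rw [Finset.sum_congr rfl fun n _ => expand n, Finset.sum_add_distrib,
    Finset.sum_add_distrib]
  have conv : ∑ n, ∑ m, S.h p a n * (Gam0 S p c n m * S.h p b m)
      = ∑ n, ∑ m, S.h p a n * (Gam0 S p c n m * S.h p m b) :=
    Finset.sum_congr rfl fun n _ => Finset.sum_congr rfl fun m _ => by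
      rw [S.h_symm p b m]
  rw [conv, contrG S p a b c, contrG S p a c b]
  have first : ∑ n, S.h p a n * pd n (fun q => S.h q b c) p = Tt S p a b c := rfl
  rw [first, Tt_symm S p a c b, Bt_symm S p a b, Bt_symm S p a c]
  ring
end Aux11
section Aux12
variable (S : ClassicalSpacetime)

lemma rot_diff (Γ Γ' : Conn) (σ : Vec) (p : Pt) (a b : Ix) :
    ∑ k, S.h p a k * covV Γ σ p b k - ∑ k, S.h p a k * covV Γ' σ p b k
      = ∑ k, ∑ r, S.h p a k * ((Γ p b k r - Γ' p b k r) * σ p r) := by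
  rw [← Finset.sum_sub_distrib]
  refine Finset.sum_congr rfl fun k _ => ?_
  have hd : covV Γ σ p b k - covV Γ' σ p b k
      = ∑ r, (Γ p b k r - Γ' p b k r) * σ p r := by
    unfold covV
    have e : ∀ r, (Γ p b k r - Γ' p b k r) * σ p r
        = Γ p b k r * σ p r - Γ' p b k r * σ p r := fun r => by ring
    rw [Finset.sum_congr rfl fun r _ => e r, Finset.sum_sub_distrib]
    ring
  rw [← mul_sub, hd, Finset.mul_sum]

lemma rot_vs_spatial (Γ Γ' : Conn) (σ : Vec) (p : Pt) (a b : Ix) :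
    rotOf S Γ σ p a b - (1/2) * ((∑ k, S.h p a k * covV Γ' σ p b k)
        - ∑ k, S.h p b k * covV Γ' σ p a k)
      = (1/2) * ((∑ k, ∑ r, S.h p a k * ((Γ p b k r - Γ' p b k r) * σ p r))
          - ∑ k, ∑ r, S.h p b k * ((Γ p a k r - Γ' p a k r) * σ p r)) := by
  unfold rotOf
  have c1 : ∑ k, S.h p k a * covV Γ σ p b k = ∑ k, S.h p a k * covV Γ σ p b k :=
    Finset.sum_congr rfl fun k _ => by rw [S.h_symm p k a]
  have c2 : ∑ k, S.h p k b * covV Γ σ p a k = ∑ k, S.h p b k * covV Γ σ p a k :=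
    Finset.sum_congr rfl fun k _ => by rw [S.h_symm p k b]
  rw [c1, c2]
  linear_combination (1/2) * rot_diff S Γ Γ' σ p a b - (1/2) * rot_diff S Γ Γ' σ p b a

lemma Aiff (Γ Γ' : Conn) (htf : TorsionFree Γ) (htf' : TorsionFree Γ')
    (hsp : ∀ p a b c, ∑ n, S.h p a n * covT20 Γ' S.h p n b c = 0) (p : Pt) (a b c : Ix) :
    Aten S Γ Γ' p a b c - Aten S Γ Γ' p b a c
      = (∑ n, S.h p n a * covT20 Γ S.h p n b c)
        - ∑ n, S.h p n b * covT20 Γ S.h p n a c := by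
  rw [GA S Γ Γ' htf htf' hsp p a b c, GA S Γ Γ' htf htf' hsp p b a c,
    Aswap S Γ Γ' htf htf' p b c a]
  ring

/-- the Z-sums are contractions with Aten -/
lemma Zcontract (Γ Γ' : Conn) (σ : Vec) (p : Pt) (a b c' : Ix) :
    ∑ r, S.h p c' r * ((∑ k, S.h p a k * (Γ p b k r - Γ' p b k r))
        - ∑ k, S.h p b k * (Γ p a k r - Γ' p a k r))
      = Aten S Γ Γ' p a b c' - Aten S Γ Γ' p b a c' := by
  unfold Aten
  rw [Finset.sum_congr rfl fun r _ =>
    (by rw [mul_sub, Finset.mul_sum, Finset.mul_sum] :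
      S.h p c' r * ((∑ k, S.h p a k * (Γ p b k r - Γ' p b k r))
          - ∑ k, S.h p b k * (Γ p a k r - Γ' p a k r))
        = (∑ k, S.h p c' r * (S.h p a k * (Γ p b k r - Γ' p b k r)))
          - ∑ k, S.h p c' r * (S.h p b k * (Γ p a k r - Γ' p a k r))),
    Finset.sum_sub_distrib, Finset.sum_comm]
  congr 1
  · refine Finset.sum_congr rfl fun k _ => Finset.sum_congr rfl fun r _ => ?_
    rw [S.h_symm p c' r]
    ring
  · rw [Finset.sum_comm]
    refine Finset.sum_congr rfl fun k _ => Finset.sum_congr rfl fun r _ => ?_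
    rw [S.h_symm p c' r]
    ring

/-- the key exchange identity for condition (5), given A-symmetry -/
lemma Zzero (Γ Γ' : Conn) (σ : Vec) (p : Pt) (a b : Ix)
    (hA : ∀ c', Aten S Γ Γ' p a b c' - Aten S Γ Γ' p b a c' = 0)
    (hσ : ∑ n, S.t p n * σ p n = 0) :
    (∑ k, ∑ r, S.h p a k * ((Γ p b k r - Γ' p b k r) * σ p r))
      - ∑ k, ∑ r, S.h p b k * ((Γ p a k r - Γ' p a k r) * σ p r) = 0 := by
  set v : Ix → ℝ := fun r => (∑ k, S.h p a k * (Γ p b k r - Γ' p b k r))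
      - ∑ k, S.h p b k * (Γ p a k r - Γ' p a k r) with hv
  have hvz : ∀ c', ∑ r, S.h p c' r * v r = 0 := by
    intro c'
    rw [hv]
    rw [Zcontract S Γ Γ' σ p a b c']
    exact hA c'
  have hkp : ∑ r, v r * σ p r = 0 := ker_pair S p v (σ p) hvz hσ
  have e1 : (∑ k, ∑ r, S.h p a k * ((Γ p b k r - Γ' p b k r) * σ p r))
      = ∑ r, (∑ k, S.h p a k * (Γ p b k r - Γ' p b k r)) * σ p r := by
    rw [Finset.sum_comm]
    refine Finset.sum_congr rfl fun r _ => ?_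
    rw [Finset.sum_mul]
    exact Finset.sum_congr rfl fun k _ => by ring
  have e2 : (∑ k, ∑ r, S.h p b k * ((Γ p a k r - Γ' p a k r) * σ p r))
      = ∑ r, (∑ k, S.h p b k * (Γ p a k r - Γ' p a k r)) * σ p r := by
    rw [Finset.sum_comm]
    refine Finset.sum_congr rfl fun r _ => ?_
    rw [Finset.sum_mul]
    exact Finset.sum_congr rfl fun k _ => by ring
  rw [e1, e2, ← Finset.sum_sub_distrib]
  rw [← hkp]
  refine Finset.sum_congr rfl fun r _ => ?_
  rw [hv]
  ring

lemma hcol_smooth (c : Ix) : ContDiff ℝ (⊤ : ℕ∞) (fun q r => S.h q r c) :=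
  contDiff_pi.mpr fun r => contDiff_pi.mp (contDiff_pi.mp S.smooth_h r) c

lemma hcol_space (c : Ix) : Spacelike S (fun q r => S.h q r c) := fun p => S.orth p c

lemma cond4_extract (Γ : Conn)
    (hR4 : ∀ ξ : Vec, ContDiff ℝ (⊤ : ℕ∞) ξ →
      (∀ p a, pd a (fun q => ∑ n, ξ q n * S.t q n) p = 0) →
      ∀ p b, (∑ n, S.t p n * rotOf S Γ ξ p n b = 0)
        ∧ (∑ n, S.t p n * rotOf S Γ ξ p b n = 0))
    (ξ : Vec) (hξs : ContDiff ℝ (⊤ : ℕ∞) ξ) (C : ℝ)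
    (hconst : ∀ q, ∑ n, S.t q n * ξ q n = C) (p : Pt) (b : Ix) :
    ∑ n, ξ p n * ∑ m, S.h p b m * covC Γ S.t p m n = 0 := by
  have adm : ∀ p a, pd a (fun q => ∑ n, ξ q n * S.t q n) p = 0 := by
    intro p a
    have hfe : (fun q => ∑ n, ξ q n * S.t q n) = fun _ => C := funext fun q => by
      rw [Finset.sum_congr rfl fun n _ => mul_comm (ξ q n) (S.t q n)]
      exact hconst q
    rw [hfe, pd_const]
    rfl
  have h0 := (hR4 ξ hξs adm p b).1
  rw [rot_t S Γ ξ hξs p b] at h0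
  have hpd : ∀ m : Ix, pd m (fun q => ∑ n, S.t q n * ξ q n) p = 0 := by
    intro m
    have hfe : (fun q => ∑ n, S.t q n * ξ q n) = fun _ => C := funext hconst
    rw [hfe, pd_const]
    rfl
  have e : ∑ m, S.h p m b * (pd m (fun q => ∑ n, S.t q n * ξ q n) p
        - ∑ n, ξ p n * covC Γ S.t p m n)
      = - ∑ m, S.h p m b * ∑ n, ξ p n * covC Γ S.t p m n := by
    rw [Finset.sum_congr rfl fun m _ =>
      (by rw [hpd m]; ring : S.h p m b * (pd m (fun q => ∑ n, S.t q n * ξ q n) p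
            - ∑ n, ξ p n * covC Γ S.t p m n)
        = -(S.h p m b * ∑ n, ξ p n * covC Γ S.t p m n)), Finset.sum_neg_distrib]
  rw [e] at h0
  have h1 : ∑ m, S.h p m b * ∑ n, ξ p n * covC Γ S.t p m n = 0 := by linarith
  calc ∑ n, ξ p n * ∑ m, S.h p b m * covC Γ S.t p m n
      = ∑ n, ∑ m, S.h p m b * (ξ p n * covC Γ S.t p m n) := by
        refine Finset.sum_congr rfl fun n _ => ?_
        rw [Finset.mul_sum]
        refine Finset.sum_congr rfl fun m _ => ?_
        rw [S.h_symm p b m]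
        ring
    _ = ∑ m, S.h p m b * ∑ n, ξ p n * covC Γ S.t p m n := by
        rw [Finset.sum_comm]
        exact Finset.sum_congr rfl fun m _ => by rw [Finset.mul_sum]
    _ = 0 := h1

end Aux12
/-- For a torsion-free connection ∇ on a classical spacetime with
temporal non-metricity Q_{ab} = ∇_a t_b and spatial non-metricity Q_a^{bc} = ∇_a h^{bc},
the map ξ^a ↦ ∇^[a ξ^{b]} is a standard of rotation compatible with t_a and h^{ab}
iff h^{an} Q_{nb} = 0 and h^{n[a} Q_n^{b]c} = 0. -/
theorem rotation_standard_iff_nonmetricity_conditions (S : ClassicalSpacetime)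
    (Γ : Conn) (hΓs : ContDiff ℝ (⊤ : ℕ∞) Γ) (htf : TorsionFree Γ) :
    IsRotationStd S (rotOf S Γ) ↔
      ((∀ p a b, ∑ n, S.h p a n * covC Γ S.t p n b = 0) ∧
       (∀ p a b c,
          ∑ n, S.h p n a * covT20 Γ S.h p n b c
            = ∑ n, S.h p n b * covT20 Γ S.h p n a c)) := by
  constructor
  · intro hR
    obtain ⟨h1, h2, h3, h4, h5⟩ := hR
    constructor
    · intro p a b
      have hker : ∀ c, ∑ n, S.h p c n * (fun n => ∑ m, S.h p a m * covC Γ S.t p m n) n = 0 := by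
        intro c
        have hx := cond4_extract S Γ h4 (fun q r => S.h q r c) (hcol_smooth S c) 0
          (fun q => S.orth q c) p a
        calc ∑ n, S.h p c n * (∑ m, S.h p a m * covC Γ S.t p m n)
            = ∑ n, (fun q r => S.h q r c) p n * ∑ m, S.h p a m * covC Γ S.t p m n := by
              refine Finset.sum_congr rfl fun n _ => ?_
              show S.h p c n * _ = S.h p n c * _
              rw [S.h_symm p c n]
          _ = 0 := hx
      obtain ⟨k, hk⟩ := (S.h_ker p (fun n => ∑ m, S.h p a m * covC Γ S.t p m n)).mp hker
      have hxiw : ∑ n, xiz S p n * (fun n => ∑ m, S.h p a m * covC Γ S.t p m n) n = 0 :=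
        cond4_extract S Γ h4 (xiz S) (xiz_smooth S) 1 (xiz_unit S) p a
      rw [hk] at hxiw
      have hsum : ∑ n, xiz S p n * (k • S.t p) n = k * ∑ n, S.t p n * xiz S p n := by
        rw [Finset.mul_sum]
        refine Finset.sum_congr rfl fun n _ => ?_
        show xiz S p n * (k * S.t p n) = _
        ring
      rw [hsum, xiz_unit S p, mul_one] at hxiw
      have hwb := congrFun hk b
      rw [hxiw] at hwb
      calc ∑ n, S.h p a n * covC Γ S.t p n b
          = (fun n => ∑ m, S.h p a m * covC Γ S.t p m n) b := rfl
        _ = ((0:ℝ) • S.t p) b := hwb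
        _ = 0 := by simp
    · intro p a b c
      have ea : ∀ (x y : Ix), ∑ k, ∑ r, S.h p x k
            * ((Γ p y k r - Gam0 S p y k r) * (fun q r => S.h q r c) p r)
          = Aten S Γ (Gam0 S) p x y c := by
        intro x y
        unfold Aten
        refine Finset.sum_congr rfl fun k _ => Finset.sum_congr rfl fun r _ => ?_
        show S.h p x k * ((Γ p y k r - Gam0 S p y k r) * S.h p r c) = _
        ring
      have hA : Aten S Γ (Gam0 S) p a b c - Aten S Γ (Gam0 S) p b a c = 0 := by
        have h5c := h5 (xiz S) (hhat S) (Gam0 S) (fun q r => S.h q r c)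
          ⟨xiz_smooth S, xiz_unit S⟩ (hhat_proj S) (tf0 S) (hsp0 S)
          (hcol_smooth S c) (hcol_space S c) p a b
        rw [spatialD_simp S (xiz S) (hhat S) (Gam0 S) (fun q r => S.h q r c)
            (hhat_proj S) (hsp0 S) (hcol_smooth S c) (hcol_space S c) p a b,
          spatialD_simp S (xiz S) (hhat S) (Gam0 S) (fun q r => S.h q r c)
            (hhat_proj S) (hsp0 S) (hcol_smooth S c) (hcol_space S c) p b a] at h5c
        have hrs := rot_vs_spatial S Γ (Gam0 S) (fun q r => S.h q r c) p a b
        rw [ea a b, ea b a] at hrs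
        rw [h5c] at hrs
        have : Aten S Γ (Gam0 S) p a b c - Aten S Γ (Gam0 S) p b a c
            = 2 * ((1/2) * (Aten S Γ (Gam0 S) p a b c - Aten S Γ (Gam0 S) p b a c)) := by
          ring
        rw [this, ← hrs]
        ring
      have hAiff := Aiff S Γ (Gam0 S) htf (tf0 S) (hsp0 S) p a b c
      rw [hA] at hAiff
      linarith
  · rintro ⟨hQ1, hQ2⟩
    refine ⟨fun ξ η hξ hη => rot_add S Γ ξ η hξ hη,
      fun α ξ hα hξ p a b => rot_mul S Γ α ξ hα hξ p a b,
      fun ξ _ p a b => rot_antisymm S Γ ξ p a b, ?_, ?_⟩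
    · intro ξ hξ hadm p b
      have hfirst : ∑ n, S.t p n * rotOf S Γ ξ p n b = 0 := by
        rw [rot_t S Γ ξ hξ p b]
        have hpd : ∀ m : Ix, pd m (fun q => ∑ n, S.t q n * ξ q n) p = 0 := by
          intro m
          have hfe : (fun q => ∑ n, S.t q n * ξ q n) = fun q => ∑ n, ξ q n * S.t q n :=
            funext fun q => Finset.sum_congr rfl fun n _ => mul_comm _ _
          rw [hfe]
          exact hadm p m
        have e : ∑ m, S.h p m b * (pd m (fun q => ∑ n, S.t q n * ξ q n) p
              - ∑ n, ξ p n * covC Γ S.t p m n)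
            = - ∑ m, S.h p m b * ∑ n, ξ p n * covC Γ S.t p m n := by
          rw [Finset.sum_congr rfl fun m _ =>
            (by rw [hpd m]; ring : S.h p m b * (pd m (fun q => ∑ n, S.t q n * ξ q n) p
                  - ∑ n, ξ p n * covC Γ S.t p m n)
              = -(S.h p m b * ∑ n, ξ p n * covC Γ S.t p m n)), Finset.sum_neg_distrib]
        rw [e]
        have hz : ∑ m, S.h p m b * ∑ n, ξ p n * covC Γ S.t p m n = 0 := by
          calc ∑ m, S.h p m b * ∑ n, ξ p n * covC Γ S.t p m n
              = ∑ m, ∑ n, ξ p n * (S.h p b m * covC Γ S.t p m n) := by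
                refine Finset.sum_congr rfl fun m _ => ?_
                rw [Finset.mul_sum]
                refine Finset.sum_congr rfl fun n _ => ?_
                rw [S.h_symm p b m]
                ring
            _ = ∑ n, ξ p n * ∑ m, S.h p b m * covC Γ S.t p m n := by
                rw [Finset.sum_comm]
                exact Finset.sum_congr rfl fun n _ => by rw [Finset.mul_sum]
            _ = 0 := Finset.sum_eq_zero fun n _ => by rw [hQ1 p b n, mul_zero]
        rw [hz]
        ring
      refine ⟨hfirst, ?_⟩
      rw [Finset.sum_congr rfl fun n _ =>
        (by rw [rot_antisymm S Γ ξ p b n]; ring : S.t p n * rotOf S Γ ξ p b n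
          = -(S.t p n * rotOf S Γ ξ p n b)), Finset.sum_neg_distrib, hfirst, neg_zero]
    · intro ξ hh Γ' σ hUT hproj htf' hsp hσs hσ p a b
      rw [spatialD_simp S ξ hh Γ' σ hproj hsp hσs hσ p a b,
        spatialD_simp S ξ hh Γ' σ hproj hsp hσs hσ p b a]
      have hA : ∀ c', Aten S Γ Γ' p a b c' - Aten S Γ Γ' p b a c' = 0 := by
        intro c'
        rw [Aiff S Γ Γ' htf htf' hsp p a b c', hQ2 p a b c']
        ring
      have hz := Zzero S Γ Γ' σ p a b hA (hσ p)
      have hrs := rot_vs_spatial S Γ Γ' σ p a b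
      rw [hz] at hrs
      linarith
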